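/- Let Φ be a unital positive linear map on B(H), let A, B be positive definite operators, let ν ∈ (0,1], and set R = R(A,B) = max{r(A⁻¹B), r(B⁻¹A)}. Then K(R², ν)·(Φ(A) ♯ν Φ(B)) ≤ Φ(A ♯ν B), where K(h,ν) = ((h^ν − h)/((ν−1)(h−1)))·((ν−1)(h^ν−1)/(ν(h^ν−h)))^ν is the generalized Kantorovich constant and A ♯ν B = A^{1/2}(A^{-1/2}BA^{-1/2})^ν A^{1/2} is the weighted geometric mean. -/

import Mathlib

set_option synthInstance.maxHeartbeats 400000
set_option maxHeartbeats 800000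

open scoped NNReal ENNReal
open ContinuousLinearMap Filter

variable {H : Type*} [NormedAddCommGroup H] [InnerProductSpace ℂ H] [CompleteSpace H]

/-- A bounded operator is positive definite: positive (semi-definite) and invertible. -/
def IsPosDef (A : H →L[ℂ] H) : Prop := A.IsPositive ∧ IsUnit A

/-- `R(A,B) = max {r(A⁻¹B), r(B⁻¹A)}` where `r` is the spectral radius. -/
noncomputable def Rdist (A B : H →L[ℂ] H) : ℝ :=
  max (spectralRadius ℂ (Ring.inverse A * B)).toReal
    (spectralRadius ℂ (Ring.inverse B * A)).toReal

/-- The weighted geometric mean `A ♯ν B = A^(1/2) (A^(-1/2) B A^(-1/2))^ν A^(1/2)`. -/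
noncomputable def wgm (ν : ℝ) (A B : H →L[ℂ] H) : H →L[ℂ] H :=
  CFC.sqrt A * CFC.rpow (CFC.sqrt (Ring.inverse A) * B * CFC.sqrt (Ring.inverse A)) ν *
    CFC.sqrt A

/-- The geometric mean `A ♯ B`. -/
noncomputable def gm (A B : H →L[ℂ] H) : H →L[ℂ] H := wgm (1/2) A B

/-- The generalized Kantorovich constant `K(h, ν)`. -/
noncomputable def Kconst (h ν : ℝ) : ℝ :=
  ((h ^ ν - h) / ((ν - 1) * (h - 1))) *
    (((ν - 1) * (h ^ ν - 1)) / (ν * (h ^ ν - h))) ^ ν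

open CFC Ring

/-!
Mond–Pečarić method. With `Z = A^{-1/2} B A^{-1/2}` we have `A ♯ν B = A^{1/2} Z^ν A^{1/2}`.
The spectral radii defining `R` give `R⁻¹ A ≤ B ≤ R A`, i.e. `σ(Z) ⊆ [R⁻¹, R]`, and there the
concave function `t^ν` lies above its chord `a t + b`; conjugating, `a B + b A ≤ A ♯ν B`, and
applying the monotone map `Φ`, `a Φ(B) + b Φ(A) ≤ Φ(A ♯ν B)`.
In the other direction, weighted AM–GM gives `(a/ν)^ν (b/(1-ν))^(1-ν) t^ν ≤ a t + b` for every
`t ≥ 0`, and this constant is exactly `K(R², ν)`. Since `Φ(A)` is again invertible, the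
functional calculus of `Φ(A)^{-1/2} Φ(B) Φ(A)^{-1/2}` turns this into
`K(R², ν) Φ(A) ♯ν Φ(B) ≤ a Φ(B) + b Φ(A)`.
-/

noncomputable def chordSlope (ν m M : ℝ) : ℝ := (M ^ ν - m ^ ν) / (M - m)

noncomputable def chordIntercept (ν m M : ℝ) : ℝ := (M * m ^ ν - m * M ^ ν) / (M - m)

lemma chordSlope_mul_add_chordIntercept_le_rpow {ν m M t : ℝ} (hm : 0 ≤ m) (hmM : m < M)
    (hν0 : 0 ≤ ν) (hν1 : ν ≤ 1) (ht : t ∈ Set.Icc m M) :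
    chordSlope ν m M * t + chordIntercept ν m M ≤ t ^ ν := by
  have hMm : 0 < M - m := sub_pos.mpr hmM
  set θ := (M - t) / (M - m)
  have hθ0 : 0 ≤ θ := div_nonneg (by linarith [ht.2]) hMm.le
  have hθ1 : 0 ≤ 1 - θ := by
    rw [sub_nonneg, div_le_one hMm]; linarith [ht.1]
  have hconcave := (Real.concaveOn_rpow hν0 hν1).2 (Set.mem_Ici.mpr hm)
    (Set.mem_Ici.mpr (hm.trans hmM.le)) hθ0 hθ1 (by ring)
  have hpoint : θ * m + (1 - θ) * M = t := by simp only [θ]; field_simp; ring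
  have hvalue : θ * m ^ ν + (1 - θ) * M ^ ν = chordSlope ν m M * t + chordIntercept ν m M := by
    simp only [θ, chordSlope, chordIntercept]; field_simp; ring
  simpa only [smul_eq_mul, hpoint, hvalue] using hconcave

lemma geom_mean_mul_rpow_le_mul_add {a b t ν : ℝ} (ha : 0 ≤ a) (hb : 0 ≤ b) (ht : 0 ≤ t)
    (hν0 : 0 < ν) (hν1 : ν < 1) :
    (a / ν) ^ ν * (b / (1 - ν)) ^ (1 - ν) * t ^ ν ≤ a * t + b := by
  have h1ν : 0 < 1 - ν := sub_pos.mpr hν1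
  have hamgm := Real.geom_mean_le_arith_mean2_weighted hν0.le h1ν.le
    (div_nonneg (mul_nonneg ha ht) hν0.le) (div_nonneg hb h1ν.le) (add_sub_cancel ν 1)
  calc (a / ν) ^ ν * (b / (1 - ν)) ^ (1 - ν) * t ^ ν
      = (a * t / ν) ^ ν * (b / (1 - ν)) ^ (1 - ν) := by
        rw [mul_div_right_comm, Real.mul_rpow (div_nonneg ha hν0.le) ht]; ring
    _ ≤ ν * (a * t / ν) + (1 - ν) * (b / (1 - ν)) := hamgm
    _ = a * t + b := by field_simp

section Kantorovich
variable {R ν : ℝ}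

lemma chordSlope_inv_self (hR : 0 < R) (hR1 : R ≠ 1) :
    chordSlope ν R⁻¹ R = R * ((R ^ ν) ^ 2 - 1) / (R ^ ν * (R ^ 2 - 1)) := by
  have hR2 : R ^ 2 - 1 ≠ 0 := fun h => hR1 (by nlinarith)
  have hs : 0 < R ^ ν := Real.rpow_pos_of_pos hR ν
  rw [chordSlope, Real.inv_rpow hR.le]
  field_simp

lemma chordIntercept_inv_self (hR : 0 < R) (hR1 : R ≠ 1) :
    chordIntercept ν R⁻¹ R = (R ^ 2 - (R ^ ν) ^ 2) / (R ^ ν * (R ^ 2 - 1)) := by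
  have hR2 : R ^ 2 - 1 ≠ 0 := fun h => hR1 (by nlinarith)
  have hs : 0 < R ^ ν := Real.rpow_pos_of_pos hR ν
  rw [chordIntercept, Real.inv_rpow hR.le]
  field_simp

lemma one_lt_rpow_and_rpow_lt_self (hR : 1 < R) (hν0 : 0 < ν) (hν1 : ν < 1) :
    1 < R ^ ν ∧ R ^ ν < R :=
  ⟨Real.one_lt_rpow hR hν0, by simpa using Real.rpow_lt_rpow_of_exponent_lt hR hν1⟩

lemma Kconst_sq_eq (hR : 1 < R) (hν0 : 0 < ν) (hν1 : ν < 1) :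
    Kconst (R ^ 2) ν =
      (chordSlope ν R⁻¹ R / ν) ^ ν * (chordIntercept ν R⁻¹ R / (1 - ν)) ^ (1 - ν) := by
  have hR0 : 0 < R := one_pos.trans hR
  obtain ⟨hs1, hsR⟩ := one_lt_rpow_and_rpow_lt_self hR hν0 hν1
  rw [Kconst, ← Real.rpow_pow_comm hR0.le ν 2, chordSlope_inv_self hR0 hR.ne',
    chordIntercept_inv_self hR0 hR.ne']
  set s := R ^ ν
  have h1ν : 0 < 1 - ν := sub_pos.mpr hν1
  have hR2 : 0 < R ^ 2 - 1 := by nlinarith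
  have hs2 : 0 < s ^ 2 - 1 := by nlinarith
  have hRs : 0 < R ^ 2 - s ^ 2 := by nlinarith
  set a := R * (s ^ 2 - 1) / (s * (R ^ 2 - 1)) / ν
  set b := (R ^ 2 - s ^ 2) / (s * (R ^ 2 - 1)) / (1 - ν)
  set x := ((ν - 1) * (s ^ 2 - 1)) / (ν * (s ^ 2 - R ^ 2))
  have ha : 0 < a := by positivity
  have hb : 0 < b := by positivity
  have hx : 0 ≤ x := div_nonneg_of_nonpos (by nlinarith) (by nlinarith)
  have hratio : a / b = R * x := by
    have : s ^ 2 - R ^ 2 ≠ 0 := by nlinarith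
    simp only [a, b, x]
    field_simp
    ring
  calc _ = b * s * x ^ ν := by
        congr 1
        have : ν - 1 ≠ 0 := by linarith
        simp only [b]
        field_simp
        ring
    _ = a ^ ν * b ^ (1 - ν) := by
        rw [Real.rpow_sub hb, Real.rpow_one, mul_assoc, ← Real.mul_rpow hR0.le hx, ← hratio,
          Real.div_rpow ha.le hb.le]
        field_simp

lemma Kconst_sq_mul_rpow_le (hR : 1 < R) (hν0 : 0 < ν) (hν1 : ν < 1) {t : ℝ} (ht : 0 ≤ t) :
    Kconst (R ^ 2) ν * t ^ ν ≤ chordSlope ν R⁻¹ R * t + chordIntercept ν R⁻¹ R := by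
  have hR0 : 0 < R := one_pos.trans hR
  obtain ⟨hs1, hsR⟩ := one_lt_rpow_and_rpow_lt_self hR hν0 hν1
  have hslope : 0 ≤ chordSlope ν R⁻¹ R := by
    rw [chordSlope_inv_self hR0 hR.ne']
    have : 0 ≤ (R ^ ν) ^ 2 - 1 := by nlinarith
    have : 0 ≤ R ^ 2 - 1 := by nlinarith
    positivity
  have hintercept : 0 ≤ chordIntercept ν R⁻¹ R := by
    rw [chordIntercept_inv_self hR0 hR.ne']
    have : 0 ≤ R ^ 2 - (R ^ ν) ^ 2 := by nlinarith
    have : 0 ≤ R ^ 2 - 1 := by nlinarith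
    positivity
  rw [Kconst_sq_eq hR hν0 hν1]
  exact geom_mean_mul_rpow_le_mul_add hslope hintercept ht hν0 hν1

end Kantorovich

lemma Kconst_one_left (ν : ℝ) : Kconst 1 ν = 0 := by simp [Kconst]

lemma Kconst_one_right (h : ℝ) : Kconst h 1 = 0 := by simp [Kconst]

section ConjSqrt
variable {A : Type*} [CStarAlgebra A] [PartialOrder A] [StarOrderedRing A]

lemma spectrum_conjSqrt {c : A} (hc : IsStrictlyPositive c) (a : A) :
    spectrum ℂ (conjSqrt c a) = spectrum ℂ (c * a) := by
  obtain ⟨u, hu⟩ := hc.isUnit_cfcSqrt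
  have hconj : (↑u⁻¹ : A) * (c * a) * u = u * a * u := by
    rw [← sqrt_mul_sqrt_self c hc.nonneg, ← hu]
    simp [mul_assoc]
  rw [conjSqrt_apply, ← hu, ← hconj, spectrum.units_conjugate']

lemma conjSqrt_nonneg (c : A) {a : A} (ha : 0 ≤ a) : 0 ≤ conjSqrt c a := by
  simpa using conjSqrt_monotone (c := c) ha

lemma conjSqrt_algebraMap (c : A) (r : ℝ) (hc : 0 ≤ c) : conjSqrt c (algebraMap ℝ A r) = r • c := by
  rw [Algebra.algebraMap_eq_smul_one, map_smul, conjSqrt_one c hc]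

lemma le_spectralRadius_smul {a b : A} (ha : IsStrictlyPositive a) (hb : 0 ≤ b) :
    b ≤ (spectralRadius ℂ (a⁻¹ʳ * b)).toReal • a := by
  set z := conjSqrt a⁻¹ʳ b
  have hz : IsSelfAdjoint z := .of_nonneg (conjSqrt_nonneg _ hb)
  have hr : (spectralRadius ℂ (a⁻¹ʳ * b)).toReal = ‖z‖ := by
    rw [spectralRadius, ← spectrum_conjSqrt ha.ringInverse, ← spectralRadius,
      hz.spectralRadius_eq_nnnorm]
    rfl
  calc b = conjSqrt a z := (conjSqrt_conjSqrt_ringInverse a b).symm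
    _ ≤ conjSqrt a (algebraMap ℝ A ‖z‖) := conjSqrt_monotone hz.le_algebraMap_norm_self
    _ = _ := by rw [conjSqrt_algebraMap a _ ha.nonneg, hr]

lemma spectrum_conjSqrt_ringInverse_subset_Icc {a b : A} (ha : IsStrictlyPositive a) {m M : ℝ}
    (hm : m • a ≤ b) (hM : b ≤ M • a) : spectrum ℝ (conjSqrt a⁻¹ʳ b) ⊆ Set.Icc m M := by
  have hsmul (r : ℝ) : conjSqrt a⁻¹ʳ (r • a) = algebraMap ℝ A r := by
    rw [map_smul, conjSqrt_ringInverse_self a, Algebra.algebraMap_eq_smul_one]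
  have hlow : algebraMap ℝ A m ≤ conjSqrt a⁻¹ʳ b := hsmul m ▸ conjSqrt_monotone hm
  have hup : conjSqrt a⁻¹ʳ b ≤ algebraMap ℝ A M := hsmul M ▸ conjSqrt_monotone hM
  have hz : IsSelfAdjoint (conjSqrt a⁻¹ʳ b) := (IsSelfAdjoint.algebraMap A (.all m)).of_ge hlow
  exact fun t ht => ⟨(algebraMap_le_iff_le_spectrum hz).mp hlow t ht,
    (le_algebraMap_iff_spectrum_le hz).mp hup t ht⟩

lemma conjSqrt_cfc_affine {a b : A} (ha : IsStrictlyPositive a) (hb : 0 ≤ b) (α β : ℝ) :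
    conjSqrt a (cfc (fun t : ℝ => α * t + β) (conjSqrt a⁻¹ʳ b)) = α • b + β • a := by
  have hz : IsSelfAdjoint (conjSqrt a⁻¹ʳ b) := .of_nonneg (conjSqrt_nonneg _ hb)
  rw [cfc_add _ (fun t => α * t) (fun _ => β), cfc_const_mul_id α _ hz, cfc_const β _ hz,
    map_add, map_smul, conjSqrt_conjSqrt_ringInverse a b, conjSqrt_algebraMap a β ha.nonneg]

lemma smul_add_smul_le_conjSqrt_rpow {a b : A} (ha : IsStrictlyPositive a) (hb : 0 ≤ b)
    {α β ν : ℝ} (hν : 0 ≤ ν) (h : ∀ t ∈ spectrum ℝ (conjSqrt a⁻¹ʳ b), α * t + β ≤ t ^ ν) :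
    α • b + β • a ≤ conjSqrt a (conjSqrt a⁻¹ʳ b ^ ν) := by
  rw [← conjSqrt_cfc_affine ha hb, CFC.rpow_eq_cfc_real (conjSqrt_nonneg _ hb)]
  exact conjSqrt_monotone (cfc_mono h)

lemma smul_conjSqrt_rpow_le {a b : A} (ha : IsStrictlyPositive a) (hb : 0 ≤ b)
    {κ α β ν : ℝ} (hν : 0 ≤ ν) (h : ∀ t ∈ spectrum ℝ (conjSqrt a⁻¹ʳ b), κ * t ^ ν ≤ α * t + β) :
    κ • conjSqrt a (conjSqrt a⁻¹ʳ b ^ ν) ≤ α • b + β • a := by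
  rw [← conjSqrt_cfc_affine ha hb, CFC.rpow_eq_cfc_real (conjSqrt_nonneg _ hb), ← map_smul,
    ← cfc_const_mul κ (fun t : ℝ => t ^ ν) _]
  exact conjSqrt_monotone (cfc_mono h)

lemma IsStrictlyPositive.map_of_map_one {B : Type*} [CStarAlgebra B] [PartialOrder B]
    [StarOrderedRing B] (f : A →ₚ[ℂ] B) (hf : f 1 = 1) {a : A} (ha : IsStrictlyPositive a) :
    IsStrictlyPositive (f a) := by
  rcases subsingleton_or_nontrivial A with hA | hA
  · rw [Subsingleton.elim a 1, hf]
    exact isStrictlyPositive_one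
  obtain ⟨ε, hε, hεa⟩ := (CFC.exists_pos_algebraMap_le_iff ha.isSelfAdjoint).mpr
    fun _ => ha.spectrum_pos
  have hmap : f (algebraMap ℝ A ε) = algebraMap ℝ B ε := by
    rw [Algebra.algebraMap_eq_smul_one, PositiveLinearMap.map_smul_of_tower, hf,
      Algebra.algebraMap_eq_smul_one]
  exact (isStrictlyPositive_algebraMap hε).of_le (hmap ▸ OrderHomClass.mono f hεa)

end ConjSqrt

lemma wgm_eq_conjSqrt (ν : ℝ) (A B : H →L[ℂ] H) :
    wgm ν A B = conjSqrt A (conjSqrt A⁻¹ʳ B ^ ν) :=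
  rfl

omit [CompleteSpace H] in
lemma IsPosDef.isStrictlyPositive {A : H →L[ℂ] H} (hA : IsPosDef A) : IsStrictlyPositive A :=
  IsStrictlyPositive.iff_of_unital.mpr ⟨(nonneg_iff_isPositive A).mpr hA.1, hA.2⟩

omit [CompleteSpace H] in
lemma Rdist_comm (A B : H →L[ℂ] H) : Rdist A B = Rdist B A :=
  max_comm _ _

lemma le_Rdist_smul {A B : H →L[ℂ] H} (hA : IsStrictlyPositive A) (hB : 0 ≤ B) :
    B ≤ Rdist A B • A :=
  (le_spectralRadius_smul hA hB).trans (smul_le_smul_of_nonneg_right (le_max_left _ _) hA.nonneg)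

lemma one_le_of_le_smul_of_le_smul {E : Type*} [AddCommGroup E] [PartialOrder E]
    [IsOrderedAddMonoid E] [Module ℝ E] [PosSMulMono ℝ E] {a b : E} {r : ℝ} (hr : 0 ≤ r)
    (hb : 0 ≤ b) (hb0 : b ≠ 0) (hba : b ≤ r • a) (hab : a ≤ r • b) : 1 ≤ r := by
  by_contra! hr1
  have hpos : 0 < 1 - r * r := by nlinarith
  have hle : (1 - r * r) • b ≤ 0 := by
    rw [sub_smul, one_smul, sub_nonpos, mul_smul]
    exact hba.trans (smul_le_smul_of_nonneg_left hab hr)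
  exact hb0 ((smul_eq_zero.mp (hle.antisymm (smul_nonneg hpos.le hb))).resolve_left hpos.ne')

lemma one_le_Rdist [Nontrivial H] {A B : H →L[ℂ] H} (hA : IsStrictlyPositive A)
    (hB : IsStrictlyPositive B) : 1 ≤ Rdist A B :=
  one_le_of_le_smul_of_le_smul (le_max_of_le_left ENNReal.toReal_nonneg) hB.nonneg
    hB.isUnit.ne_zero (le_Rdist_smul hA hB.nonneg) (Rdist_comm A B ▸ le_Rdist_smul hB hA.nonneg)

lemma chord_smul_add_le_wgm {X Y : H →L[ℂ] H} (hX : IsStrictlyPositive X) {R ν : ℝ} (hR : 1 < R)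
    (hν0 : 0 ≤ ν) (hν1 : ν ≤ 1) (hlow : R⁻¹ • X ≤ Y) (hup : Y ≤ R • X) :
    chordSlope ν R⁻¹ R • Y + chordIntercept ν R⁻¹ R • X ≤ wgm ν X Y := by
  rw [wgm_eq_conjSqrt]
  exact smul_add_smul_le_conjSqrt_rpow hX ((smul_nonneg (by positivity) hX.nonneg).trans hlow)
    hν0 fun _ ht => chordSlope_mul_add_chordIntercept_le_rpow (by positivity)
      ((inv_lt_one_of_one_lt₀ hR).trans hR) hν0 hν1
      (spectrum_conjSqrt_ringInverse_subset_Icc hX hlow hup ht)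

lemma Kconst_smul_wgm_le {X Y : H →L[ℂ] H} (hX : IsStrictlyPositive X) (hY : 0 ≤ Y) {R ν : ℝ}
    (hR : 1 < R) (hν0 : 0 < ν) (hν1 : ν < 1) :
    Kconst (R ^ 2) ν • wgm ν X Y ≤ chordSlope ν R⁻¹ R • Y + chordIntercept ν R⁻¹ R • X := by
  rw [wgm_eq_conjSqrt]
  exact smul_conjSqrt_rpow_le hX hY hν0.le fun _ ht =>
    Kconst_sq_mul_rpow_le hR hν0 hν1 (spectrum_nonneg_of_nonneg (conjSqrt_nonneg _ hY) ht)

/-- `K(R(A,B)², ν) • (Φ(A) ♯ν Φ(B)) ≤ Φ(A ♯ν B)` for a unital positive linear map. -/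
theorem stmt_4 (Φ : (H →L[ℂ] H) →ₗ[ℂ] (H →L[ℂ] H))
    (hΦ1 : Φ 1 = 1) (hΦpos : ∀ T : H →L[ℂ] H, 0 ≤ T → 0 ≤ Φ T)
    (A B : H →L[ℂ] H) (hA : IsPosDef A) (hB : IsPosDef B)
    (ν : ℝ) (hν : ν ∈ Set.Ioc (0 : ℝ) 1) :
    Kconst ((Rdist A B) ^ 2) ν • wgm ν (Φ A) (Φ B) ≤ Φ (wgm ν A B) := by
  obtain ⟨hν0, hν1⟩ := hν
  rcases subsingleton_or_nontrivial H with hH | hH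
  · exact (Subsingleton.elim _ _).le
  have hA' := hA.isStrictlyPositive
  have hB' := hB.isStrictlyPositive
  have hΦwgm : 0 ≤ Φ (wgm ν A B) := hΦpos _ (wgm_eq_conjSqrt ν A B ▸ conjSqrt_nonneg _ rpow_nonneg)
  -- `Kconst h ν` divides by `(ν - 1) * (h - 1)`: it is the junk value `0` if `ν = 1` or `R = 1`.
  obtain rfl | hν1 := hν1.eq_or_lt
  · simpa [Kconst_one_right] using hΦwgm
  obtain hR1 | hR1 := (one_le_Rdist hA' hB').eq_or_lt
  · simpa [← hR1, Kconst_one_left] using hΦwgm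
  have hlow : (Rdist A B)⁻¹ • A ≤ B := (inv_smul_le_iff_of_pos (one_pos.trans hR1)).mpr
    (Rdist_comm A B ▸ le_Rdist_smul hB' hA'.nonneg)
  set R := Rdist A B
  let Ψ := PositiveLinearMap.mk₀ Φ hΦpos
  calc Kconst (R ^ 2) ν • wgm ν (Φ A) (Φ B)
      ≤ chordSlope ν R⁻¹ R • Φ B + chordIntercept ν R⁻¹ R • Φ A :=
        Kconst_smul_wgm_le (hA'.map_of_map_one Ψ hΦ1) (hΦpos B hB'.nonneg) hR1 hν0 hν1
    _ = Ψ (chordSlope ν R⁻¹ R • B + chordIntercept ν R⁻¹ R • A) := by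
        rw [map_add, PositiveLinearMap.map_smul_of_tower, PositiveLinearMap.map_smul_of_tower]
        rfl
    _ ≤ Ψ (wgm ν A B) := OrderHomClass.mono Ψ
        (chord_smul_add_le_wgm hA' hR1 hν0.le hν1.le hlow (le_Rdist_smul hA' hB'.nonneg))
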